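/- arXiv:1305.6050 — 2 statements merged into one kernel-verified Lean document; each statement's English description precedes it below -/
import Mathlib

section
/- Let Λ be a free abelian group of finite rank and 1 → S¹ → Λ̂ → Λ → 1 a central extension of Λ by S¹ = ℝ/ℤ whose commutator map is b : Λ × Λ → S¹. Suppose B : Λ × Λ → ℝ is an antisymmetric biadditive form with [B(λ,μ)] = b(λ,μ) for all λ,μ ∈ Λ. Then there exists a set-theoretic section τ : Λ → Λ̂ satisfying τ(λ)τ(μ) = τ(λ+μ)·[½ B(λ,μ)] for all λ,μ ∈ Λ. -/
/-!
Twisting the multiplication of `Λ̂` by the half form, `x ⋆ y = x * y * [-½ B(π x, π y)]`, gives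
an associative product because `B` is biadditive and `S¹` is central, and a commutative one
because the twist `[½ B(μ, λ) - ½ B(λ, μ)] = [B(μ, λ)]` undoes the commutator; here the
antisymmetry of `B` is used. The projection `π` is then a surjective homomorphism from this
abelian group onto the free abelian group `Λ`, so it has a homomorphic section `τ`, and
`τ (λ + μ) = τ λ ⋆ τ μ` is the required identity.
-/

open Multiplicative Function

section Twist

variable {G N Λ : Type*} [Group G] [AddCommGroup N] [AddCommGroup Λ]
  (ι : Multiplicative N →* G) (π : G →* Multiplicative Λ) (β : Λ →+ Λ →+ N)

def twistMul (x y : G) : G := x * y * ι (ofAdd (-β (toAdd (π x)) (toAdd (π y))))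

def twistInv (x : G) : G := x⁻¹ * ι (ofAdd (-β (toAdd (π x)) (toAdd (π x))))

variable {ι π β}

theorem map_twistMul (hπι : ∀ s, π (ι s) = 1) (x y : G) :
    π (twistMul ι π β x y) = π x * π y := by
  rw [twistMul, map_mul, hπι, mul_one, map_mul]

theorem twistMul_assoc (hcentral : ∀ s g, ι s * g = g * ι s) (hπι : ∀ s, π (ι s) = 1)
    (x y z : G) :
    twistMul ι π β (twistMul ι π β x y) z = twistMul ι π β x (twistMul ι π β y z) := by
  simp only [twistMul, map_mul, hπι, mul_one, toAdd_mul, map_add, AddMonoidHom.add_apply]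
  rw [mul_assoc _ (ι _) z, hcentral]
  simp only [mul_assoc, ← map_mul, ← ofAdd_add]
  congr 5
  abel

theorem one_twistMul (x : G) : twistMul ι π β 1 x = x := by
  simp [twistMul]

theorem twistInv_twistMul (hcentral : ∀ s g, ι s * g = g * ι s) (hπι : ∀ s, π (ι s) = 1)
    (x : G) : twistMul ι π β (twistInv ι π β x) x = 1 := by
  rw [twistMul, twistInv, map_mul, hπι, mul_one, mul_assoc _ (ι _) x, hcentral]
  simp

theorem twistMul_comm
    (hcomm : ∀ x y : G, x⁻¹ * y⁻¹ * x * y =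
      ι (ofAdd (β (toAdd (π x)) (toAdd (π y)) - β (toAdd (π y)) (toAdd (π x)))))
    (x y : G) : twistMul ι π β x y = twistMul ι π β y x := by
  have hxy : x * y =
      y * x * ι (ofAdd (β (toAdd (π x)) (toAdd (π y)) - β (toAdd (π y)) (toAdd (π x)))) := by
    rw [← hcomm]; group
  rw [twistMul, twistMul, hxy, mul_assoc, ← map_mul, ← ofAdd_add]
  congr 3
  abel

def Twist (_ι : Multiplicative N →* G) (_π : G →* Multiplicative Λ) (_β : Λ →+ Λ →+ N) :
    Type _ := G

abbrev twistCommGroup (hcentral : ∀ s g, ι s * g = g * ι s) (hπι : ∀ s, π (ι s) = 1)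
    (hcomm : ∀ x y : G, x⁻¹ * y⁻¹ * x * y =
      ι (ofAdd (β (toAdd (π x)) (toAdd (π y)) - β (toAdd (π y)) (toAdd (π x))))) :
    CommGroup (Twist ι π β) :=
  letI : Mul (Twist ι π β) := ⟨(twistMul ι π β : G → G → G)⟩
  letI : One (Twist ι π β) := ⟨(1 : G)⟩
  letI : Inv (Twist ι π β) := ⟨(twistInv ι π β : G → G)⟩
  -- `(G := G)` stops the elaborator from unifying `G` with `Twist ι π β`.
  letI : Group (Twist ι π β) := Group.ofLeftAxioms (twistMul_assoc (G := G) hcentral hπι)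
    (one_twistMul (G := G) (β := β)) (twistInv_twistMul (G := G) hcentral hπι)
  { mul_comm := twistMul_comm (G := G) hcomm }

end Twist

theorem MonoidHom.exists_rightInverse_of_surjective_of_free {Λ H : Type*} [AddCommGroup Λ]
    [Module.Free ℤ Λ] [CommGroup H] (f : H →* Multiplicative Λ) (hf : Surjective f) :
    ∃ s : Multiplicative Λ →* H, RightInverse s f := by
  obtain ⟨s, hs⟩ := Module.projective_lifting_property
    (MonoidHom.toAdditiveLeft f).toIntLinearMap LinearMap.id hf
  exact ⟨AddMonoidHom.toMultiplicativeLeft s.toAddMonoidHom,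
    fun l => LinearMap.congr_fun hs (toAdd l)⟩

theorem exists_section_mul_eq_of_commutator {G N Λ : Type*} [Group G] [AddCommGroup N]
    [AddCommGroup Λ] [Module.Free ℤ Λ] {ι : Multiplicative N →* G} {π : G →* Multiplicative Λ}
    (β : Λ →+ Λ →+ N) (hπ : Surjective π) (hcentral : ∀ s g, ι s * g = g * ι s)
    (hπι : ∀ s, π (ι s) = 1)
    (hcomm : ∀ x y : G, x⁻¹ * y⁻¹ * x * y =
      ι (ofAdd (β (toAdd (π x)) (toAdd (π y)) - β (toAdd (π y)) (toAdd (π x))))) :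
    ∃ τ : Λ → G, (∀ l, π (τ l) = ofAdd l) ∧ ∀ l m, τ l * τ m = τ (l + m) * ι (ofAdd (β l m)) := by
  let _ := twistCommGroup hcentral hπι hcomm
  let p : Twist ι π β →* Multiplicative Λ :=
    MonoidHom.mk' π (map_twistMul (G := G) (β := β) hπι)
  obtain ⟨s, hs⟩ := p.exists_rightInverse_of_surjective_of_free hπ
  let τ : Λ → G := fun l => s (ofAdd l)
  have hτπ : ∀ l, π (τ l) = ofAdd l := fun l => hs (ofAdd l)
  have hτ : ∀ l m, τ (l + m) = twistMul ι π β (τ l) (τ m) := fun l m =>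
    s.map_mul (ofAdd l) (ofAdd m)
  refine ⟨τ, hτπ, fun l m => ?_⟩
  rw [hτ, twistMul, hτπ, hτπ, toAdd_ofAdd, toAdd_ofAdd, mul_assoc, ← map_mul, ← ofAdd_add,
    neg_add_cancel, ofAdd_zero, map_one, mul_one]

theorem exists_section_with_half_form_cocycle_general
    (Λ : Type*) [AddCommGroup Λ] [Module.Free ℤ Λ]
    (Λhat : Type*) [Group Λhat]
    (ι : Multiplicative (AddCircle (1:ℝ)) →* Λhat)
    (π : Λhat →* Multiplicative Λ)
    (hπ : Function.Surjective π)
    (hexact : ∀ g : Λhat, π g = 1 ↔ g ∈ ι.range)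
    (hcentral : ∀ (s : Multiplicative (AddCircle (1:ℝ))) (g : Λhat), ι s * g = g * ι s)
    (B : Λ →+ Λ →+ ℝ) (hB : ∀ l m : Λ, B l m = - B m l)
    (hcomm : ∀ x y : Λhat,
      x⁻¹ * y⁻¹ * x * y =
        ι (Multiplicative.ofAdd
          ((B (Multiplicative.toAdd (π x)) (Multiplicative.toAdd (π y)) : ℝ) :
            AddCircle (1:ℝ)))) :
    ∃ τ : Λ → Λhat,
      (∀ l : Λ, π (τ l) = Multiplicative.ofAdd l) ∧
      (∀ l m : Λ, τ l * τ m =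
        τ (l + m) * ι (Multiplicative.ofAdd ((B l m / 2 : ℝ) : AddCircle (1:ℝ)))) := by
  let β : Λ →+ Λ →+ AddCircle (1:ℝ) :=
    B.compr₂ ((QuotientAddGroup.mk' _).comp (AddMonoidHom.mulRight 2⁻¹))
  have hβ : ∀ l m, β l m = ((B l m / 2 : ℝ) : AddCircle (1:ℝ)) := fun l m => by
    simp [β, div_eq_mul_inv]
  have hcomm' : ∀ x y : Λhat, x⁻¹ * y⁻¹ * x * y =
      ι (ofAdd (β (toAdd (π x)) (toAdd (π y)) - β (toAdd (π y)) (toAdd (π x)))) := by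
    intro x y
    rw [hcomm, hβ, hβ, ← AddCircle.coe_sub, hB (toAdd (π y)), neg_div, sub_neg_eq_add,
      add_halves]
  obtain ⟨τ, hτπ, hτ⟩ := exists_section_mul_eq_of_commutator β hπ hcentral
    (fun s => (hexact _).mpr ⟨s, rfl⟩) hcomm'
  exact ⟨τ, hτπ, fun l m => by rw [hτ, hβ]⟩

/-- Given a central extension `1 → S¹ → Λ̂ → Λ → 1` of a free abelian group
`Λ` of finite rank by `S¹ = ℝ/ℤ` with commutator map `b`, and an antisymmetric biadditive
`B : Λ × Λ → ℝ` with `[B(λ,μ)] = b(λ,μ)`, there exists a set-theoretic section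
`τ : Λ → Λ̂` with `τ(λ)τ(μ) = τ(λ+μ)·[½B(λ,μ)]`. -/
theorem exists_section_with_half_form_cocycle
    (Λ : Type*) [AddCommGroup Λ] [Module.Free ℤ Λ] [Module.Finite ℤ Λ]
    (Λhat : Type*) [Group Λhat]
    (ι : Multiplicative (AddCircle (1:ℝ)) →* Λhat)
    (π : Λhat →* Multiplicative Λ)
    (hι : Function.Injective ι)
    (hπ : Function.Surjective π)
    (hexact : ∀ g : Λhat, π g = 1 ↔ g ∈ ι.range)
    (hcentral : ∀ (s : Multiplicative (AddCircle (1:ℝ))) (g : Λhat), ι s * g = g * ι s)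
    (B : Λ →+ Λ →+ ℝ) (hB : ∀ l m : Λ, B l m = - B m l)
    (hcomm : ∀ x y : Λhat,
      x⁻¹ * y⁻¹ * x * y =
        ι (Multiplicative.ofAdd
          ((B (Multiplicative.toAdd (π x)) (Multiplicative.toAdd (π y)) : ℝ) :
            AddCircle (1:ℝ)))) :
    ∃ τ : Λ → Λhat,
      (∀ l : Λ, π (τ l) = Multiplicative.ofAdd l) ∧
      (∀ l m : Λ, τ l * τ m =
        τ (l + m) * ι (Multiplicative.ofAdd ((B l m / 2 : ℝ) : AddCircle (1:ℝ)))) :=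
  exists_section_with_half_form_cocycle_general Λ Λhat ι π hπ hexact hcentral B hB hcomm
end

section
/- Let G be a locally compact group with left Haar measure, acting continuously and properly on a locally compact Hausdorff space M, and let V be a real vector space. Suppose χ : M → ℝ is a continuous function such that ∫_G χ(γ⁻¹·m) dγ = 1 for all m ∈ M (with the integral well-defined). If f : G × M → V satisfies the cocycle identity f(γ₁γ₂, m) = f(γ₁, m) + γ₁·f(γ₂, γ₁⁻¹ m) appropriately interpreted as df = 0 in the homogeneous bar complex, then f is a coboundary: there exists h : M → V with (dh) = ± f. In the simplest degree, if f : G × M → ℝ satisfies f(γ₁γ₂,m) = f(γ₂,m) + f(γ₁, γ₂ m) for all γ₁,γ₂ ∈ G, m ∈ M, then h(m) := ∫_G χ(γ⁻¹ m) f(γ, γ⁻¹ m) dγ satisfies f(γ, m) = h(γ m) − h(m) for all γ, m. -/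
open MeasureTheory

/-! Substituting `δ ↦ γδ` (left invariance of `μ`) in the integral defining `h(γ·m)` and
expanding `f(γδ, δ⁻¹·m)` by the cocycle identity splits `h(γ·m)` into `h(m)` plus
`f(γ, m) · ∫ χ(δ⁻¹·m) dμ(δ) = f(γ, m)`. -/

namespace MeasureTheory

variable {G M E : Type*} [Group G] [MeasurableSpace G] [MeasurableMul G] [MulAction G M]
  [NormedAddCommGroup E] [NormedSpace ℝ E] {μ : Measure G} [μ.IsMulLeftInvariant]
  {χ : M → ℝ} {f : G → M → E}

variable (μ χ f) in
noncomputable def cutoffAverage (m : M) : E :=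
  ∫ δ, χ (δ⁻¹ • m) • f δ (δ⁻¹ • m) ∂μ

theorem cutoffAverage_smul
    (hf : ∀ (γ₁ γ₂ : G) (m : M), f (γ₁ * γ₂) m = f γ₂ m + f γ₁ (γ₂ • m)) (γ : G) (m : M) :
    cutoffAverage μ χ f (γ • m) =
      ∫ δ, (χ (δ⁻¹ • m) • f δ (δ⁻¹ • m) + χ (δ⁻¹ • m) • f γ m) ∂μ := by
  rw [cutoffAverage, ← integral_mul_left_eq_self _ γ]
  congr 1 with δ
  have hδ : (γ * δ)⁻¹ • γ • m = δ⁻¹ • m := by rw [mul_inv_rev, mul_smul, inv_smul_smul]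
  rw [hδ, hf γ δ, smul_inv_smul, smul_add]

theorem eq_cutoffAverage_smul_sub_cutoffAverage [CompleteSpace E]
    (hint : ∀ m, Integrable (fun δ => χ (δ⁻¹ • m) • f δ (δ⁻¹ • m)) μ)
    (hχint : ∀ m, Integrable (fun δ => χ (δ⁻¹ • m)) μ)
    (hχone : ∀ m, ∫ δ, χ (δ⁻¹ • m) ∂μ = 1)
    (hf : ∀ (γ₁ γ₂ : G) (m : M), f (γ₁ * γ₂) m = f γ₂ m + f γ₁ (γ₂ • m)) (γ : G) (m : M) :
    f γ m = cutoffAverage μ χ f (γ • m) - cutoffAverage μ χ f m := by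
  rw [cutoffAverage_smul hf, integral_add (hint m) ((hχint m).smul_const _),
    integral_smul_const, hχone, one_smul, cutoffAverage, add_sub_cancel_left]

end MeasureTheory

theorem cocycle_is_coboundary_general
    (G : Type*) [Group G] [TopologicalSpace G] [IsTopologicalGroup G]
    [MeasurableSpace G] [BorelSpace G]
    (M : Type*) [MulAction G M]
    (μ : Measure G) [μ.IsHaarMeasure]
    (χ : M → ℝ) (f : G → M → ℝ)
    (hint : ∀ m : M, Integrable (fun γ : G => χ (γ⁻¹ • m) * f γ (γ⁻¹ • m)) μ)
    (hχint : ∀ m : M, Integrable (fun γ : G => χ (γ⁻¹ • m)) μ)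
    (hχone : ∀ m : M, ∫ γ : G, χ (γ⁻¹ • m) ∂μ = 1)
    (hcoc : ∀ (γ₁ γ₂ : G) (m : M), f (γ₁ * γ₂) m = f γ₂ m + f γ₁ (γ₂ • m)) :
    ∀ (γ : G) (m : M),
      f γ m = (∫ δ : G, χ (δ⁻¹ • (γ • m)) * f δ (δ⁻¹ • (γ • m)) ∂μ) -
        ∫ δ : G, χ (δ⁻¹ • m) * f δ (δ⁻¹ • m) ∂μ :=
  eq_cutoffAverage_smul_sub_cutoffAverage hint hχint hχone hcoc

/-- degree-one case: Let `G` be a locally compact group with left Haar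
measure `μ` acting continuously and properly on a locally compact Hausdorff space `M`, and
let `χ : M → ℝ` be continuous with `∫_G χ(γ⁻¹·m) dμ(γ) = 1` for all `m`.  If
`f : G × M → ℝ` satisfies the cocycle identity `f(γ₁γ₂, m) = f(γ₂, m) + f(γ₁, γ₂·m)`,
then `h(m) := ∫_G χ(γ⁻¹·m)·f(γ, γ⁻¹·m) dμ(γ)` satisfies
`f(γ, m) = h(γ·m) − h(m)` for all `γ, m`. -/
theorem cocycle_is_coboundary
    (G : Type*) [Group G] [TopologicalSpace G] [IsTopologicalGroup G]
    [LocallyCompactSpace G] [MeasurableSpace G] [BorelSpace G]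
    (M : Type*) [TopologicalSpace M] [LocallyCompactSpace M] [T2Space M]
    [MulAction G M] [ContinuousSMul G M]
    (μ : Measure G) [μ.IsHaarMeasure]
    (χ : M → ℝ) (hχcont : Continuous χ)
    (f : G → M → ℝ) (hfcont : Continuous fun p : G × M => f p.1 p.2)
    (hint : ∀ m : M, Integrable (fun γ : G => χ (γ⁻¹ • m) * f γ (γ⁻¹ • m)) μ)
    (hχint : ∀ m : M, Integrable (fun γ : G => χ (γ⁻¹ • m)) μ)
    (hχone : ∀ m : M, ∫ γ : G, χ (γ⁻¹ • m) ∂μ = 1)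
    (hcoc : ∀ (γ₁ γ₂ : G) (m : M), f (γ₁ * γ₂) m = f γ₂ m + f γ₁ (γ₂ • m)) :
    ∀ (γ : G) (m : M),
      f γ m = (∫ δ : G, χ (δ⁻¹ • (γ • m)) * f δ (δ⁻¹ • (γ • m)) ∂μ) -
        ∫ δ : G, χ (δ⁻¹ • m) * f δ (δ⁻¹ • m) ∂μ :=
  cocycle_is_coboundary_general G M μ χ f hint hχint hχone hcoc
end
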